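/- Let (S, L, τ, ℓ) be a finitely branching labelled Markov chain over a countable state space and s, t ∈ S. The probabilistic bisimilarity distance satisfies d(s,t) < 1 if and only if there exists a policy T such that in the induced Markov chain on pairs, the probability of reaching a pair with different labels from (s,t) is strictly less than 1. In particular, if some policy T gives positive probability of reaching a bisimilar pair from (s,t), then d(s,t) < 1. -/

import Mathlib

open scoped ENNReal Classical

/-- `ω` is a coupling of `μ` and `ν`. -/
def IsCoupling {S : Type*} (μ ν : S → ℝ≥0∞) (ω : S × S → ℝ≥0∞) : Prop :=
  (∀ s, (∑' t, ω (s, t)) = μ s) ∧ (∀ t, (∑' s, ω (s, t)) = ν t)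

/-- `r` is a probabilistic bisimulation on the LMC with transitions `τ` and labels `ℓ`. -/
def IsBisimulation {S L : Type*} (τ : S → S → ℝ≥0∞) (ℓ : S → L) (r : S → S → Prop) : Prop :=
  Equivalence r ∧ ∀ s t, r s t → ℓ s = ℓ t ∧
    ∀ u, (∑' v : {v // r u v}, τ s v) = (∑' v : {v // r u v}, τ t v)

/-- Probabilistic bisimilarity: the largest probabilistic bisimulation. -/
def Bisim {S L : Type*} (τ : S → S → ℝ≥0∞) (ℓ : S → L) (s t : S) : Prop :=
  ∃ r, IsBisimulation τ ℓ r ∧ r s t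

/-- The distance operator `Δ`. -/
noncomputable def Delta {S L : Type*} (τ : S → S → ℝ≥0∞) (ℓ : S → L)
    (e : S → S → ℝ≥0∞) (s t : S) : ℝ≥0∞ :=
  if ℓ s ≠ ℓ t then 1
  else ⨅ ω ∈ {ω | IsCoupling (τ s) (τ t) ω}, ∑' p : S × S, ω p * e p.1 p.2

/-- A policy: a coupling for every same-labelled, non-bisimilar pair. -/
def IsPolicy {S L : Type*} (τ : S → S → ℝ≥0∞) (ℓ : S → L)
    (T : S → S → S × S → ℝ≥0∞) : Prop :=
  ∀ s t, ℓ s = ℓ t → ¬ Bisim τ ℓ s t → IsCoupling (τ s) (τ t) (T s t)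

/-- The operator `Θ^T` induced by a policy `T`. -/
noncomputable def Theta {S L : Type*} (τ : S → S → ℝ≥0∞) (ℓ : S → L)
    (T : S → S → S × S → ℝ≥0∞) (e : S → S → ℝ≥0∞) (s t : S) : ℝ≥0∞ :=
  if Bisim τ ℓ s t then 0
  else if ℓ s ≠ ℓ t then 1
  else ∑' p : S × S, T s t p * e p.1 p.2

/-- `x` is the least (pre-)fixed point of `f`. -/
def IsLfp {α : Type*} [Preorder α] (f : α → α) (x : α) : Prop :=
  f x ≤ x ∧ ∀ y, f y ≤ y → x ≤ y

/-- Probability of reaching the target set `Z` in exactly `n` steps in the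
Markov chain on pairs induced by a policy `T`, where bisimilar pairs and
differently-labelled pairs are absorbing. -/
noncomputable def reachN {S L : Type*} (τ : S → S → ℝ≥0∞) (ℓ : S → L)
    (T : S → S → S × S → ℝ≥0∞) (Z : S × S → Prop) : ℕ → S × S → ℝ≥0∞
  | 0, p => if Z p then 1 else 0
  | n + 1, p =>
      if Z p ∨ Bisim τ ℓ p.1 p.2 ∨ ℓ p.1 ≠ ℓ p.2 then 0
      else ∑' q : S × S, T p.1 p.2 q * reachN τ ℓ T Z n q

/-- Probability of ever reaching the target set `Z` from a pair. -/
noncomputable def Reach {S L : Type*} (τ : S → S → ℝ≥0∞) (ℓ : S → L)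
    (T : S → S → S × S → ℝ≥0∞) (Z : S × S → Prop) (p : S × S) : ℝ≥0∞ :=
  ∑' n : ℕ, reachN τ ℓ T Z n p

/-!
For a policy `T`, the probability of reaching a differently-labelled pair is a pre-fixed point
of `Δ`: at a bisimilar pair use a coupling supported on bisimilar pairs, from which no
differently-labelled pair is ever reached. Hence `d ≤ Reach^T`. Conversely, finite branching makes
the set of couplings compact and the cost `ω ↦ ∑ ω · d` lower semicontinuous, so optimal
couplings exist; `d` is superharmonic for the policy made of them and therefore dominates its
reachability probability. Finally, bisimilar pairs and differently-labelled pairs are disjoint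
absorbing targets, so their reachability probabilities sum to at most `1`.
-/

theorem ENNReal.lowerSemicontinuous_mul_const (c : ℝ≥0∞) :
    LowerSemicontinuous fun x : ℝ≥0∞ => x * c := by
  intro x y hy
  have hx : x ≠ 0 := by rintro rfl; simp at hy
  exact (ENNReal.Tendsto.mul_const Filter.tendsto_id (Or.inl hx)).eventually (lt_mem_nhds hy)

namespace IsCoupling

variable {S : Type*} {μ ν : S → ℝ≥0∞} {ω : S × S → ℝ≥0∞}

theorem apply_le_left (h : IsCoupling μ ν ω) (p : S × S) : ω p ≤ μ p.1 :=
  h.1 p.1 ▸ ENNReal.le_tsum (f := fun v => ω (p.1, v)) p.2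

theorem apply_le_right (h : IsCoupling μ ν ω) (p : S × S) : ω p ≤ ν p.2 :=
  h.2 p.2 ▸ ENNReal.le_tsum (f := fun u => ω (u, p.2)) p.1

theorem tsum_eq (h : IsCoupling μ ν ω) : ∑' p, ω p = ∑' u, μ u := by
  rw [ENNReal.tsum_prod (f := fun u v => ω (u, v))]
  exact tsum_congr h.1

end IsCoupling

section Couplings

variable {S : Type*} {μ ν : S → ℝ≥0∞}

theorem isCoupling_mul (hμ : ∑' u, μ u = 1) (hν : ∑' v, ν v = 1) :
    IsCoupling μ ν fun p => μ p.1 * ν p.2 :=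
  ⟨fun u => by simp only [ENNReal.tsum_mul_left, hν, mul_one],
    fun v => by simp only [ENNReal.tsum_mul_right, hμ, one_mul]⟩

theorem exists_isCoupling_of_tsum_class_eq {r : S → S → Prop} (hr : Equivalence r)
    (hμν : ∀ u, ∑' v : {v // r u v}, μ v = ∑' v : {v // r u v}, ν v)
    (hμ : ∀ u, ∑' v : {v // r u v}, μ v ≠ ⊤) :
    ∃ ω, IsCoupling μ ν ω ∧ ∀ p, ω p ≠ 0 → r p.1 p.2 := by
  set m : S → ℝ≥0∞ := fun u => ∑' v : {v // r u v}, μ v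
  have hm_rel {u v : S} (huv : r u v) : m u = m v := by
    have : r u = r v := funext fun w => propext ⟨hr.trans (hr.symm huv), hr.trans huv⟩
    change ∑' w : {w // r u w}, μ w = ∑' w : {w // r v w}, μ w
    rw [this]
  have hclass (u : S) (f : S → ℝ≥0∞) :
      ∑' v, (if r u v then f v else 0) = ∑' v : {v // r u v}, f v :=
    ((tsum_subtype {v | r u v} f).trans (tsum_congr fun v => Set.indicator_apply _ _ _)).symm
  have hcancel {a : ℝ≥0∞} {u : S} (ha : a ≤ m u) : a / m u * m u = a :=
    ENNReal.div_mul_cancel' (fun h => le_zero_iff.1 (h ▸ ha)) (fun h => absurd h (hμ u))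
  -- within each class, couple `μ` and `ν` independently, normalised by the class mass
  refine ⟨fun p => if r p.1 p.2 then μ p.1 / m p.1 * ν p.2 else 0,
    ⟨fun u => ?_, fun v => ?_⟩, fun p hp => of_not_not fun h => hp (if_neg h)⟩
  · calc ∑' v, (if r u v then μ u / m u * ν v else 0)
        = μ u / m u * m u := by rw [hclass, ENNReal.tsum_mul_left, ← hμν]
      _ = μ u := hcancel (ENNReal.le_tsum (f := fun v : {v // r u v} => μ v) ⟨u, hr.refl u⟩)
  · calc ∑' u, (if r u v then μ u / m u * ν v else 0)
        = ∑' u, (if r v u then ν v / m v * μ u else 0) := by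
          refine tsum_congr fun u => ?_
          by_cases huv : r u v
          · rw [if_pos huv, if_pos (hr.symm huv), hm_rel huv]
            simp only [div_eq_mul_inv]
            ring
          · rw [if_neg huv, if_neg fun hvu => huv (hr.symm hvu)]
      _ = ν v / m v * m v := by rw [hclass, ENNReal.tsum_mul_left]
      _ = ν v := hcancel <|
          (ENNReal.le_tsum (f := fun u : {u // r v u} => ν u) ⟨v, hr.refl v⟩).trans_eq (hμν v).symm

end Couplings

section OptimalCoupling

variable {S : Type*} {μ ν : S → ℝ≥0∞}

theorem isClosed_setOf_isCoupling (hμ : {u | μ u ≠ 0}.Finite) (hν : {v | ν v ≠ 0}.Finite) :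
    IsClosed {ω : S × S → ℝ≥0∞ | IsCoupling μ ν ω} := by
  set A := hμ.toFinset
  set B := hν.toFinset
  set F := {ω : S × S → ℝ≥0∞ | ∀ p ∉ A ×ˢ B, ω p = 0}
  have hrow (ω) (hω : ω ∈ F) (u : S) : ∑' v, ω (u, v) = ∑ v ∈ B, ω (u, v) :=
    tsum_eq_sum fun v hv => hω _ fun h => hv (Finset.mem_product.1 h).2
  have hcol (ω) (hω : ω ∈ F) (v : S) : ∑' u, ω (u, v) = ∑ u ∈ A, ω (u, v) :=
    tsum_eq_sum fun u hu => hω _ fun h => hu (Finset.mem_product.1 h).1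
  have hF (ω) (h : IsCoupling μ ν ω) : ω ∈ F := fun p hp => by
    rcases not_and_or.1 (Finset.mem_product.not.1 hp) with hA | hB
    · exact le_zero_iff.1 ((h.apply_le_left p).trans_eq (by simpa [A] using hA))
    · exact le_zero_iff.1 ((h.apply_le_right p).trans_eq (by simpa [B] using hB))
  have hset : {ω | IsCoupling μ ν ω} = F ∩ {ω | ∀ u, ∑ v ∈ B, ω (u, v) = μ u} ∩
      {ω | ∀ v, ∑ u ∈ A, ω (u, v) = ν v} := by
    ext ω
    refine ⟨fun h => ⟨⟨hF ω h, fun u => (hrow ω (hF ω h) u).symm.trans (h.1 u)⟩,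
      fun v => (hcol ω (hF ω h) v).symm.trans (h.2 v)⟩,
      fun ⟨⟨hω, h₁⟩, h₂⟩ => ⟨fun u => (hrow ω hω u).trans (h₁ u),
        fun v => (hcol ω hω v).trans (h₂ v)⟩⟩
  rw [hset]
  refine .inter (.inter ?_ ?_) ?_ <;> simp only [F, Set.ofPred_forall]
  · exact isClosed_biInter fun p _ => isClosed_eq (continuous_apply p) continuous_const
  · exact isClosed_iInter fun u =>
      isClosed_eq (continuous_finsetSum _ fun v _ => continuous_apply _) continuous_const
  · exact isClosed_iInter fun v =>
      isClosed_eq (continuous_finsetSum _ fun u _ => continuous_apply _) continuous_const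

theorem exists_isCoupling_isMinOn (hμ : {u | μ u ≠ 0}.Finite) (hν : {v | ν v ≠ 0}.Finite)
    (hne : {ω | IsCoupling μ ν ω}.Nonempty) (e : S × S → ℝ≥0∞) :
    ∃ ω ∈ {ω | IsCoupling μ ν ω},
      IsMinOn (fun ω : S × S → ℝ≥0∞ => ∑' p, ω p * e p) {ω | IsCoupling μ ν ω} ω :=
  LowerSemicontinuousOn.exists_isMinOn hne (isClosed_setOf_isCoupling hμ hν).isCompact
    ((lowerSemicontinuous_tsum fun p => (ENNReal.lowerSemicontinuous_mul_const (e p)).comp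
      (continuous_apply p)).lowerSemicontinuousOn _)

end OptimalCoupling

section Reach

variable {S L : Type*} {τ : S → S → ℝ≥0∞} {ℓ : S → L} {T : S → S → S × S → ℝ≥0∞}
  {Z Z' : S × S → Prop} {p : S × S}

theorem reachN_succ_of_not (hZ : ¬ Z p) (hb : ¬ Bisim τ ℓ p.1 p.2) (hl : ℓ p.1 = ℓ p.2)
    (n : ℕ) : reachN τ ℓ T Z (n + 1) p = ∑' q, T p.1 p.2 q * reachN τ ℓ T Z n q := by
  simp [reachN, hZ, hb, hl]

theorem reachN_succ_of_absorbing (h : Z p ∨ Bisim τ ℓ p.1 p.2 ∨ ℓ p.1 ≠ ℓ p.2) (n : ℕ) :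
    reachN τ ℓ T Z (n + 1) p = 0 :=
  if_pos h

theorem one_le_reach (hZ : Z p) : 1 ≤ Reach τ ℓ T Z p :=
  (if_pos hZ).symm.trans_le (ENNReal.le_tsum (f := fun n => reachN τ ℓ T Z n p) 0)

theorem reach_eq_zero_of_bisim (hZ : ¬ Z p) (hb : Bisim τ ℓ p.1 p.2) : Reach τ ℓ T Z p = 0 :=
  ENNReal.tsum_eq_zero.2 fun n => by
    cases n with
    | zero => exact if_neg hZ
    | succ n => exact reachN_succ_of_absorbing (Or.inr (Or.inl hb)) n

theorem tsum_mul_reach_le_reach (hZ : ¬ Z p) (hb : ¬ Bisim τ ℓ p.1 p.2) (hl : ℓ p.1 = ℓ p.2) :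
    ∑' q, T p.1 p.2 q * Reach τ ℓ T Z q ≤ Reach τ ℓ T Z p :=
  calc ∑' q, T p.1 p.2 q * Reach τ ℓ T Z q = ∑' n, reachN τ ℓ T Z (n + 1) p := by
        simp only [Reach, ← ENNReal.tsum_mul_left, reachN_succ_of_not hZ hb hl]
        exact ENNReal.tsum_comm
    _ ≤ Reach τ ℓ T Z p :=
        ENNReal.tsum_comp_le_tsum_of_injective (add_left_injective 1) _

theorem reach_le_of_superharmonic {e : S × S → ℝ≥0∞} (hZ : ∀ p, Z p → 1 ≤ e p)
    (hstep : ∀ p, ¬ Z p → ¬ Bisim τ ℓ p.1 p.2 → ℓ p.1 = ℓ p.2 →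
      ∑' q, T p.1 p.2 q * e q ≤ e p)
    (p : S × S) : Reach τ ℓ T Z p ≤ e p := by
  refine ENNReal.tsum_le_of_sum_range_le fun N => ?_
  induction N generalizing p with
  | zero => simp
  | succ N ih =>
    rw [Finset.sum_range_succ']
    by_cases hZp : Z p
    · simp only [reachN_succ_of_absorbing (Or.inl hZp), Finset.sum_const_zero, zero_add]
      exact (if_pos hZp).trans_le (hZ p hZp)
    rw [show reachN τ ℓ T Z 0 p = 0 from if_neg hZp, add_zero]
    by_cases hab : Bisim τ ℓ p.1 p.2 ∨ ℓ p.1 ≠ ℓ p.2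
    · simp only [reachN_succ_of_absorbing (Or.inr hab), Finset.sum_const_zero, zero_le]
    obtain ⟨hb, hl⟩ := not_or.1 hab
    calc ∑ n ∈ Finset.range N, reachN τ ℓ T Z (n + 1) p
        = ∑' q, T p.1 p.2 q * ∑ n ∈ Finset.range N, reachN τ ℓ T Z n q := by
          simp only [reachN_succ_of_not hZp hb (not_not.1 hl), Finset.mul_sum]
          exact (Summable.tsum_finsetSum fun _ _ => ENNReal.summable).symm
      _ ≤ ∑' q, T p.1 p.2 q * e q := ENNReal.tsum_le_tsum fun q => mul_le_mul_right (ih q) _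
      _ ≤ e p := hstep p hZp hb (not_not.1 hl)

theorem reach_le_one (hdistr : ∀ s, ∑' t, τ s t = 1) (hT : IsPolicy τ ℓ T) (p : S × S) :
    Reach τ ℓ T Z p ≤ 1 :=
  reach_le_of_superharmonic (e := 1) (fun _ _ => le_rfl)
    (fun p _ hb hl => by
      simp only [Pi.one_apply, mul_one, (hT p.1 p.2 hl hb).tsum_eq, hdistr, le_rfl])
    p

theorem reach_or_eq_add (hZ : ∀ p, Z p → Bisim τ ℓ p.1 p.2 ∨ ℓ p.1 ≠ ℓ p.2)
    (hZ' : ∀ p, Z' p → Bisim τ ℓ p.1 p.2 ∨ ℓ p.1 ≠ ℓ p.2) (hdisj : ∀ p, Z p → ¬ Z' p)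
    (p : S × S) : Reach τ ℓ T (fun p => Z p ∨ Z' p) p = Reach τ ℓ T Z p + Reach τ ℓ T Z' p := by
  suffices h : ∀ n p, reachN τ ℓ T (fun p => Z p ∨ Z' p) n p =
      reachN τ ℓ T Z n p + reachN τ ℓ T Z' n p by
    simp only [Reach, h, ENNReal.tsum_add]
  intro n
  induction n with
  | zero =>
    intro p
    by_cases h : Z p
    · simp [reachN, h, hdisj p h]
    · by_cases h' : Z' p <;> simp [reachN, h, h']
  | succ n ih =>
    intro p
    by_cases hab : Bisim τ ℓ p.1 p.2 ∨ ℓ p.1 ≠ ℓ p.2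
    · simp only [reachN_succ_of_absorbing (Or.inr hab), add_zero]
    obtain ⟨hb, hl⟩ := not_or.1 hab
    have hZp : ¬ Z p := fun h => hab (hZ p h)
    have hZ'p : ¬ Z' p := fun h => hab (hZ' p h)
    rw [reachN_succ_of_not (not_or.2 ⟨hZp, hZ'p⟩) hb (not_not.1 hl),
      reachN_succ_of_not hZp hb (not_not.1 hl), reachN_succ_of_not hZ'p hb (not_not.1 hl),
      ← ENNReal.tsum_add]
    simp only [ih, mul_add]

end Reach

section Distance

variable {S L : Type*} {τ : S → S → ℝ≥0∞} {ℓ : S → L} {T : S → S → S × S → ℝ≥0∞}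
  {d : S → S → ℝ≥0∞}

theorem Bisim.label_eq {u v : S} (h : Bisim τ ℓ u v) : ℓ u = ℓ v :=
  let ⟨_, hr, huv⟩ := h
  (hr.2 u v huv).1

theorem Bisim.exists_isCoupling (hdistr : ∀ s, ∑' t, τ s t = 1) {u v : S} (h : Bisim τ ℓ u v) :
    ∃ ω, IsCoupling (τ u) (τ v) ω ∧ ∀ q, ω q ≠ 0 → Bisim τ ℓ q.1 q.2 := by
  obtain ⟨r, hr, huv⟩ := h
  have hclass_ne_top (w : S) : ∑' x : {x // r w x}, τ u x ≠ ⊤ :=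
    ne_top_of_le_ne_top ENNReal.one_ne_top <|
      (ENNReal.tsum_comp_le_tsum_of_injective Subtype.coe_injective (τ u)).trans_eq (hdistr u)
  obtain ⟨ω, hω, hsupp⟩ := exists_isCoupling_of_tsum_class_eq hr.1 (hr.2 u v huv).2 hclass_ne_top
  exact ⟨ω, hω, fun q hq => ⟨r, hr, hsupp q hq⟩⟩

theorem delta_le_tsum_of_isCoupling {e : S → S → ℝ≥0∞} {u v : S} (hl : ℓ u = ℓ v)
    {ω : S × S → ℝ≥0∞} (hω : IsCoupling (τ u) (τ v) ω) :
    Delta τ ℓ e u v ≤ ∑' q, ω q * e q.1 q.2 := by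
  rw [Delta, if_neg (not_not.2 hl)]
  exact iInf₂_le ω hω

theorem delta_reach_le_reach (hdistr : ∀ s, ∑' t, τ s t = 1) (hT : IsPolicy τ ℓ T) :
    Delta τ ℓ (fun u v => Reach τ ℓ T (fun p => ℓ p.1 ≠ ℓ p.2) (u, v)) ≤
      fun u v => Reach τ ℓ T (fun p => ℓ p.1 ≠ ℓ p.2) (u, v) := by
  intro u v
  by_cases hl : ℓ u = ℓ v
  swap
  · rw [Delta, if_pos hl]
    exact one_le_reach hl
  by_cases hb : Bisim τ ℓ u v
  · -- a coupling supported on bisimilar pairs never reaches differently-labelled pairs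
    obtain ⟨ω, hω, hsupp⟩ := hb.exists_isCoupling hdistr
    refine (delta_le_tsum_of_isCoupling hl hω).trans (Eq.trans_le ?_ zero_le)
    refine ENNReal.tsum_eq_zero.2 fun q => ?_
    by_cases hq : ω q = 0
    · rw [hq, zero_mul]
    · have hbq := hsupp q hq
      rw [reach_eq_zero_of_bisim (not_not.2 hbq.label_eq) hbq, mul_zero]
  · exact (delta_le_tsum_of_isCoupling hl (hT u v hl hb)).trans
      (tsum_mul_reach_le_reach (not_not.2 hl) hb hl)

theorem IsLfp.le_reach (hdistr : ∀ s, ∑' t, τ s t = 1) (hd : IsLfp (Delta τ ℓ) d)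
    (hT : IsPolicy τ ℓ T) (u v : S) : d u v ≤ Reach τ ℓ T (fun p => ℓ p.1 ≠ ℓ p.2) (u, v) :=
  hd.2 _ (delta_reach_le_reach hdistr hT) u v

theorem exists_policy_reach_le (hdistr : ∀ s, ∑' t, τ s t = 1)
    (hfin : ∀ s, {t | τ s t ≠ 0}.Finite) (hd : Delta τ ℓ d ≤ d) :
    ∃ T, IsPolicy τ ℓ T ∧ ∀ p, Reach τ ℓ T (fun p => ℓ p.1 ≠ ℓ p.2) p ≤ d p.1 p.2 := by
  choose T hT hmin using fun u v => exists_isCoupling_isMinOn (hfin u) (hfin v)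
    ⟨fun q => τ u q.1 * τ v q.2, isCoupling_mul (hdistr u) (hdistr v)⟩ fun q => d q.1 q.2
  refine ⟨T, fun u v _ _ => hT u v, reach_le_of_superharmonic (fun p hl => ?_) fun p _ hb hl => ?_⟩
  · simpa [Delta, hl] using hd p.1 p.2
  · calc ∑' q, T p.1 p.2 q * d q.1 q.2 ≤ Delta τ ℓ d p.1 p.2 := by
          rw [Delta, if_neg (not_not.2 hl)]
          exact le_iInf₂ fun ω hω => hmin p.1 p.2 hω
      _ ≤ d p.1 p.2 := hd p.1 p.2

theorem reach_ne_lt_one_of_reach_bisim_pos (hdistr : ∀ s, ∑' t, τ s t = 1) (hT : IsPolicy τ ℓ T)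
    {p : S × S} (hpos : 0 < Reach τ ℓ T (fun p => Bisim τ ℓ p.1 p.2) p) :
    Reach τ ℓ T (fun p => ℓ p.1 ≠ ℓ p.2) p < 1 := by
  have hsum : Reach τ ℓ T (fun p => ℓ p.1 ≠ ℓ p.2) p +
      Reach τ ℓ T (fun p => Bisim τ ℓ p.1 p.2) p ≤ 1 := by
    rw [← reach_or_eq_add (fun _ => Or.inr) (fun _ => Or.inl) fun _ hl hb => hl hb.label_eq]
    exact reach_le_one hdistr hT p
  exact (ENNReal.lt_add_right (ne_top_of_le_ne_top ENNReal.one_ne_top (le_self_add.trans hsum))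
    hpos.ne').trans_le hsum

end Distance

theorem stmt12_general {S L : Type*}
    (τ : S → S → ℝ≥0∞) (ℓ : S → L)
    (hdistr : ∀ s, (∑' t, τ s t) = 1)
    (hfin : ∀ s, {t | τ s t ≠ 0}.Finite)
    (d : S → S → ℝ≥0∞) (hd : IsLfp (Delta τ ℓ) d)
    (s t : S) :
    (d s t < 1 ↔ ∃ T : S → S → S × S → ℝ≥0∞, IsPolicy τ ℓ T ∧
        Reach τ ℓ T (fun p => ℓ p.1 ≠ ℓ p.2) (s, t) < 1) ∧
    ((∃ T : S → S → S × S → ℝ≥0∞, IsPolicy τ ℓ T ∧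
        0 < Reach τ ℓ T (fun p => Bisim τ ℓ p.1 p.2) (s, t)) → d s t < 1) := by
  have hback {T} (hT : IsPolicy τ ℓ T) (h : Reach τ ℓ T (fun p => ℓ p.1 ≠ ℓ p.2) (s, t) < 1) :
      d s t < 1 :=
    (hd.le_reach hdistr hT s t).trans_lt h
  refine ⟨⟨fun hlt => ?_, fun ⟨T, hT, h⟩ => hback hT h⟩, fun ⟨T, hT, hpos⟩ =>
    hback hT (reach_ne_lt_one_of_reach_bisim_pos hdistr hT hpos)⟩
  obtain ⟨T, hT, hle⟩ := exists_policy_reach_le hdistr hfin hd.1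
  exact ⟨T, hT, (hle (s, t)).trans_lt hlt⟩

/-- `d(s,t) < 1` iff some policy reaches the differently-labelled pairs from
`(s,t)` with probability < 1; in particular, if some policy reaches a
bisimilar pair with positive probability then `d(s,t) < 1`. -/
theorem stmt12 {S L : Type*} [Countable S] [Finite L]
    (τ : S → S → ℝ≥0∞) (ℓ : S → L)
    (hdistr : ∀ s, (∑' t, τ s t) = 1)
    (hfin : ∀ s, {t | τ s t ≠ 0}.Finite)
    (d : S → S → ℝ≥0∞) (hd : IsLfp (Delta τ ℓ) d)
    (s t : S) :
    (d s t < 1 ↔ ∃ T : S → S → S × S → ℝ≥0∞, IsPolicy τ ℓ T ∧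
        Reach τ ℓ T (fun p => ℓ p.1 ≠ ℓ p.2) (s, t) < 1) ∧
    ((∃ T : S → S → S × S → ℝ≥0∞, IsPolicy τ ℓ T ∧
        0 < Reach τ ℓ T (fun p => Bisim τ ℓ p.1 p.2) (s, t)) → d s t < 1) :=
  stmt12_general τ ℓ hdistr hfin d hd s t
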